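/- arXiv:2605.31507 — 5 statements merged into one kernel-verified Lean document; each statement's English description precedes it below -/
import Mathlib

section
/- Let d ≥ 2 and suppose there exist f in C^d, f ≠ 0, and integers m > (d-1)/3 such that both f and f̂ each have at least 2m zeros, with the zeros of f including m consecutive positions (i.e., supp(f) ⊆ {0,...,d-m-1} after a cyclic shift). Then a contradiction arises: no nonzero f in C^d can satisfy supp(f) ⊆ {0,...,d-m-1} and |{l : f̂_l = 0}| ≥ 2m when m > (d-1)/3. -/
/-!
Identify `dft d f l` with the value at `ζ ^ l` of the polynomial `P = ∑ j, f j X ^ j`, where `ζ`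
is a primitive `d`-th root of unity. If `f` is supported in `{0, …, d - m - 1}` then `P` is a
nonzero polynomial of degree at most `d - m - 1`, and the `ζ ^ l` are pairwise distinct, so `f̂`
has at most `d - m - 1` zeros, which is less than `2 * m` as soon as `3 * m > d - 1`.
-/

open Complex Finset

noncomputable def chi (d : ℕ) (a : ZMod d) : ℂ :=
  Complex.exp (-(2 * (Real.pi : ℂ) * Complex.I * (a.val : ℂ)) / (d : ℂ))

noncomputable def stft (d : ℕ) [NeZero d] (g f : ZMod d → ℂ) (k l : ZMod d) : ℂ :=
  ∑ j : ZMod d, f j * (starRingEnd ℂ) (g (j - k)) * chi d (j * l)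

noncomputable def dft (d : ℕ) [NeZero d] (f : ZMod d → ℂ) (l : ZMod d) : ℂ :=
  ∑ j : ZMod d, f j * chi d (j * l)

noncomputable def ft2 (d : ℕ) [NeZero d] (F : ZMod d → ZMod d → ℂ) (a b : ZMod d) : ℂ :=
  ∑ k : ZMod d, ∑ l : ZMod d, F k l * chi d (a * k + b * l)

open Polynomial

noncomputable def zeta (d : ℕ) : ℂ := Complex.exp (-(2 * (Real.pi : ℂ) * Complex.I) / d)

lemma isPrimitiveRoot_zeta (d : ℕ) [NeZero d] : IsPrimitiveRoot (zeta d) d := by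
  have h : zeta d = (Complex.exp (2 * Real.pi * Complex.I / d))⁻¹ := by
    rw [← Complex.exp_neg, zeta]
    ring_nf
  rw [h]
  exact (Complex.isPrimitiveRoot_exp d (NeZero.ne d)).inv

lemma chi_mul_eq_zeta_pow (d : ℕ) [NeZero d] (j l : ZMod d) :
    chi d (j * l) = zeta d ^ (j.val * l.val) := by
  have hchi : chi d (j * l) = zeta d ^ (j * l).val := by
    rw [chi, zeta, ← Complex.exp_nat_mul]
    ring_nf
  rw [hchi, ZMod.val_mul]
  exact (pow_eq_pow_mod _ (isPrimitiveRoot_zeta d).pow_eq_one).symm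

noncomputable def dftPoly (d : ℕ) [NeZero d] (f : ZMod d → ℂ) : ℂ[X] :=
  ∑ j : ZMod d, C (f j) * X ^ j.val

section dftPoly

variable {d : ℕ} [NeZero d] {f : ZMod d → ℂ}

lemma coeff_dftPoly_val (f : ZMod d → ℂ) (j : ZMod d) : (dftPoly d f).coeff j.val = f j := by
  rw [dftPoly, finsetSum_coeff, Finset.sum_eq_single j]
  · simp
  · intro i _ hij
    rw [coeff_C_mul_X_pow, if_neg fun h => hij (ZMod.val_injective d h.symm)]
  · simp

lemma dftPoly_ne_zero (hf : f ≠ 0) : dftPoly d f ≠ 0 := by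
  obtain ⟨j, hj⟩ := Function.ne_iff.mp hf
  intro h
  exact hj (by rw [← coeff_dftPoly_val f j, h, coeff_zero, Pi.zero_apply])

lemma natDegree_dftPoly_le {n : ℕ} (hsupp : ∀ j : ZMod d, f j ≠ 0 → j.val ≤ n) :
    (dftPoly d f).natDegree ≤ n := by
  refine natDegree_sum_le_of_forall_le _ _ fun j _ => ?_
  by_cases hj : f j = 0
  · simp [hj]
  · exact (natDegree_C_mul_X_pow_le _ _).trans (hsupp j hj)

lemma dft_eq_eval_dftPoly (f : ZMod d → ℂ) (l : ZMod d) :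
    dft d f l = (dftPoly d f).eval (zeta d ^ l.val) := by
  simp only [dft, dftPoly, eval_finsetSum, eval_mul, eval_C, eval_pow, eval_X, ← pow_mul,
    chi_mul_eq_zeta_pow, mul_comm l.val]

end dftPoly

lemma ncard_setOf_eval_pow_eq_zero_le {d : ℕ} [NeZero d] {ζ : ℂ} (hζ : IsPrimitiveRoot ζ d)
    {P : ℂ[X]} (hP : P ≠ 0) : {l : ZMod d | P.eval (ζ ^ l.val) = 0}.ncard ≤ P.natDegree :=
  calc {l : ZMod d | P.eval (ζ ^ l.val) = 0}.ncard
      ≤ (P.roots.toFinset : Set ℂ).ncard := by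
        refine Set.ncard_le_ncard_of_injOn (fun l => ζ ^ l.val) (fun l hl => ?_)
          (fun a _ b _ hab => ZMod.val_injective d (hζ.pow_inj a.val_lt b.val_lt hab))
          (Finset.finite_toSet _)
        simpa [Multiset.mem_toFinset, mem_roots hP] using hl
    _ = P.roots.toFinset.card := Set.ncard_coe_finset _
    _ ≤ P.natDegree := (Multiset.toFinset_card_le _).trans (card_roots' P)

theorem ncard_setOf_dft_eq_zero_le {d n : ℕ} [NeZero d] {f : ZMod d → ℂ} (hf : f ≠ 0)
    (hsupp : ∀ j : ZMod d, f j ≠ 0 → j.val ≤ n) : {l : ZMod d | dft d f l = 0}.ncard ≤ n := by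
  simp only [dft_eq_eval_dftPoly]
  exact (ncard_setOf_eval_pow_eq_zero_le (isPrimitiveRoot_zeta d) (dftPoly_ne_zero hf)).trans
    (natDegree_dftPoly_le hsupp)

theorem stmt5_general (d m : ℕ) [NeZero d] (hm : 3 * m > d - 1) :
    ¬ ∃ f : ZMod d → ℂ, f ≠ 0 ∧
      (∀ j : ZMod d, f j ≠ 0 → j.val ≤ d - m - 1) ∧
      2 * m ≤ {l : ZMod d | dft d f l = 0}.ncard := by
  rintro ⟨f, hf, hsupp, hzeros⟩
  have := ncard_setOf_dft_eq_zero_le hf hsupp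
  omega

theorem stmt5 (d m : ℕ) [NeZero d] (hd : 2 ≤ d) (hm : 3 * m > d - 1) :
    ¬ ∃ f : ZMod d → ℂ, f ≠ 0 ∧
      (∀ j : ZMod d, f j ≠ 0 → j.val ≤ d - m - 1) ∧
      2 * m ≤ {l : ZMod d | dft d f l = 0}.ncard :=
  stmt5_general d m hm
end

section
/- Let d be prime and f in C^d nonzero. Then |supp(f)| + |supp(f̂)| ≥ d + 1. -/
open Complex Finset

/-!
The theorem reduces to Chebotarev's theorem: every square minor `(ζ ^ (aᵢ bⱼ))` of the Fourier
matrix of prime order `p` is invertible. Indeed, if `|supp f| + |supp f̂| ≤ d`, then `f̂` vanishes on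
a set `B` with `|B| = |supp f|`, and the minor with rows `B` and columns `supp f` kills `f`.

For Chebotarev, the alternant `det (Xᵢ ^ bⱼ)` is divisible by the Vandermonde determinant in
`ℤ[X₁, …, Xₙ]`, with quotient `Q` (a Schur polynomial). If the minor vanishes, then `Q(ζ ^ aᵢ) = 0`, so
the cyclotomic polynomial `Φ_p` divides `Q(t ^ aᵢ) ∈ ℤ[t]`, and evaluating at `t = 1` gives
`p ∣ Q(1, …, 1)`. Specializing instead `Xᵢ ↦ t ^ i` and cancelling the common factor
`(t - 1) ^ (n choose 2)` shows `Q(1, …, 1) * ∏ (j - i) = ∏ (bⱼ - bᵢ)`, so `p` divides some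
`bⱼ - bᵢ`, which is impossible for distinct residues.
-/

namespace MvPolynomial

section

variable {σ R : Type*} [CommRing R] [DecidableEq σ]

lemma X_sub_X_dvd_sub_rename (i j : σ) (P : MvPolynomial σ R) :
    X i - X j ∣ P - rename (Function.update id i j) P := by
  induction P using induction_on with
  | C r => simp
  | add p q hp hq => rw [map_add, add_sub_add_comm]; exact dvd_add hp hq
  | mul_X p k hp =>
    set φ := rename (R := R) (Function.update id i j)
    rw [map_mul, show p * X k - φ p * φ (X k) = (p - φ p) * X k + φ p * (X k - φ (X k)) by ring]
    refine dvd_add (hp.mul_right _) (Dvd.dvd.mul_left ?_ _)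
    rcases eq_or_ne k i with rfl | hk <;> simp [φ, *]

lemma X_sub_X_dvd_iff {i j : σ} {P : MvPolynomial σ R} :
    X i - X j ∣ P ↔ rename (Function.update id i j) P = 0 := by
  refine ⟨?_, fun h => by simpa [h] using X_sub_X_dvd_sub_rename i j P⟩
  rintro ⟨Q, rfl⟩
  simp [Function.update_apply]

lemma prime_X_sub_X [IsDomain R] {i j : σ} (h : i ≠ j) :
    Prime (X i - X j : MvPolynomial σ R) := by
  refine ⟨sub_ne_zero.2 (X_injective.ne h), fun hu => ?_, fun P Q hPQ => ?_⟩
  · exact (hu.map (rename (Function.update id i j))).ne_zero (X_sub_X_dvd_iff.1 dvd_rfl)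
  · simp only [X_sub_X_dvd_iff, map_mul, mul_eq_zero] at hPQ ⊢
    exact hPQ

end

lemma det_vandermonde_X_dvd_det_X_pow {R : Type*} [CommRing R] [IsDomain R]
    [UniqueFactorizationMonoid R] {n : ℕ} (b : Fin n → ℕ) :
    (Matrix.vandermonde (X : Fin n → MvPolynomial (Fin n) R)).det ∣
      (Matrix.of fun i j => (X i : MvPolynomial (Fin n) R) ^ b j).det := by
  rw [Matrix.det_vandermonde, prod_sigma']
  refine prod_dvd_of_isRelPrime ?_ ?_
  · rintro ⟨i, j⟩ hij ⟨k, l⟩ hkl hne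
    simp only [coe_sigma, Set.mem_sigma_iff, coe_univ, Set.mem_univ, coe_Ioi, Set.mem_Ioi,
      true_and] at hij hkl
    rw [Function.onFun, (prime_X_sub_X hij.ne').irreducible.isRelPrime_iff_not_dvd,
      X_sub_X_dvd_iff]
    simp only [map_sub, rename_X, Function.update_apply, id, sub_eq_zero]
    split_ifs <;> simp only [X_injective.eq_iff] <;> grind
  · rintro ⟨i, j⟩ hij
    simp only [mem_sigma, mem_univ, mem_Ioi, true_and] at hij
    rw [X_sub_X_dvd_iff, AlgHom.map_det]
    refine Matrix.det_zero_of_row_eq hij.ne' ?_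
    ext k
    simp [hij.ne]

end MvPolynomial

namespace Polynomial

lemma exists_prod_eq_X_sub_C_pow_mul {ι R : Type*} [CommRing R] (s : Finset ι)
    {f : ι → R[X]} {a : R} (hf : ∀ i ∈ s, (f i).IsRoot a) :
    ∃ H : R[X], ∏ i ∈ s, f i = (X - C a) ^ #s * H ∧
      H.eval a = ∏ i ∈ s, (derivative (f i)).eval a := by
  have hfac : ∀ i ∈ s, (X - C a) * (f i /ₘ (X - C a)) = f i :=
    fun i hi => mul_divByMonic_eq_iff_isRoot.2 (hf i hi)
  refine ⟨∏ i ∈ s, f i /ₘ (X - C a), ?_, ?_⟩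
  · rw [← prod_const, ← prod_mul_distrib]
    exact (prod_congr rfl hfac).symm
  · rw [eval_prod]
    refine prod_congr rfl fun i hi => ?_
    conv_rhs => rw [← hfac i hi]
    simp [derivative_mul]

lemma exists_prod_X_pow_sub_X_pow_eq {R : Type*} [CommRing R] {n : ℕ} (c : Fin n → ℕ) :
    ∃ H : R[X], ∏ i, ∏ j ∈ Ioi i, (X ^ c j - X ^ c i) =
        (X - 1) ^ #(univ.sigma fun i : Fin n => Ioi i) * H ∧
      H.eval 1 = ∏ i, ∏ j ∈ Ioi i, ((c j : R) - c i) := by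
  rw [prod_sigma', prod_sigma']
  obtain ⟨H, hprod, heval⟩ := exists_prod_eq_X_sub_C_pow_mul (univ.sigma fun i : Fin n => Ioi i)
    (f := fun x => (X : R[X]) ^ c x.2 - X ^ c x.1) (a := 1) (by simp)
  refine ⟨H, by simpa using hprod, ?_⟩
  rw [heval]
  simp [derivative_X_pow]

end Polynomial

namespace MvPolynomial

lemma eval_one_aeval_X_pow {σ R : Type*} [CommRing R] (c : σ → ℕ) (Q : MvPolynomial σ R) :
    (aeval (fun i => (Polynomial.X : Polynomial R) ^ c i) Q).eval 1 = eval 1 Q := by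
  induction Q using induction_on <;> simp_all

lemma eval_one_mul_prod_eq_prod {R : Type*} [CommRing R] [IsDomain R] {n : ℕ}
    (b : Fin n → ℕ) {Q : MvPolynomial (Fin n) R}
    (hQ : (Matrix.of fun i j => (X i : MvPolynomial (Fin n) R) ^ b j).det =
      (Matrix.vandermonde X).det * Q) :
    eval 1 Q * ∏ i : Fin n, ∏ j ∈ Ioi i, ((j : R) - i) = ∏ i, ∏ j ∈ Ioi i, ((b j : R) - b i) := by
  set φ : MvPolynomial (Fin n) R →ₐ[R] Polynomial R :=
    aeval fun i : Fin n => Polynomial.X ^ (i : ℕ)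
  have hD : φ.mapMatrix (Matrix.of fun i j => (X i : MvPolynomial (Fin n) R) ^ b j) =
      (Matrix.vandermonde fun j => Polynomial.X ^ b j).transpose := by
    ext i j
    simp [φ, ← pow_mul, mul_comm]
  have hV : φ.mapMatrix (Matrix.vandermonde (X : Fin n → MvPolynomial (Fin n) R)) =
      Matrix.vandermonde fun i => Polynomial.X ^ (i : ℕ) := by
    ext i j
    simp [φ]
  have hmap := congrArg φ hQ
  rw [map_mul, AlgHom.map_det, AlgHom.map_det, hD, hV, Matrix.det_transpose,
    Matrix.det_vandermonde, Matrix.det_vandermonde] at hmap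
  obtain ⟨Hb, hHb, hHb_one⟩ := Polynomial.exists_prod_X_pow_sub_X_pow_eq (R := R) b
  obtain ⟨H, hH, hH_one⟩ :=
    Polynomial.exists_prod_X_pow_sub_X_pow_eq (R := R) fun i : Fin n => (i : ℕ)
  rw [hHb, hH, mul_assoc] at hmap
  have hcancel := congrArg (Polynomial.eval 1)
    (mul_left_cancel₀ (pow_ne_zero _ (Polynomial.X_sub_C_ne_zero 1)) hmap)
  rw [Polynomial.eval_mul, eval_one_aeval_X_pow, hHb_one, hH_one] at hcancel
  rw [hcancel, mul_comm]

end MvPolynomial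

namespace IsPrimitiveRoot

lemma pow_val_mul {M : Type*} [CommMonoid M] {ζ : M} {p : ℕ} [NeZero p]
    (hζ : IsPrimitiveRoot ζ p) (x y : ZMod p) : ζ ^ (x * y).val = ζ ^ (x.val * y.val) := by
  have h := pow_mod_orderOf ζ (x.val * y.val)
  rwa [← hζ.eq_orderOf, ← ZMod.val_mul] at h

variable {K : Type*} [Field K] [CharZero K] {p : ℕ} [Fact p.Prime] {ζ : K}

lemma prime_dvd_eval_one (hζ : IsPrimitiveRoot ζ p) {f : Polynomial ℤ}
    (hf : Polynomial.aeval ζ f = 0) : (p : ℤ) ∣ f.eval 1 := by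
  have hp := (Fact.out : p.Prime).pos
  have hdvd : Polynomial.cyclotomic p ℤ ∣ f :=
    Polynomial.cyclotomic_eq_minpoly hζ hp ▸
      minpoly.isIntegrallyClosed_dvd (hζ.isIntegral hp) hf
  simpa using map_dvd (Polynomial.evalRingHom 1) hdvd

theorem det_pow_val_mul_ne_zero (hζ : IsPrimitiveRoot ζ p) {n : ℕ} {a b : Fin n → ZMod p}
    (ha : Function.Injective a) (hb : Function.Injective b) :
    (Matrix.of fun i j => ζ ^ (a i * b j).val).det ≠ 0 := by
  intro hdet
  obtain ⟨Q, hQ⟩ := MvPolynomial.det_vandermonde_X_dvd_det_X_pow (R := ℤ) fun j => (b j).val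
  let φ : MvPolynomial (Fin n) ℤ →ₐ[ℤ] Polynomial ℤ :=
    MvPolynomial.aeval fun i => Polynomial.X ^ (a i).val
  have hroot : Polynomial.aeval ζ (φ Q) = 0 := by
    have hD : ((Polynomial.aeval ζ).comp φ).mapMatrix
        (Matrix.of fun i j => MvPolynomial.X i ^ (b j).val) =
        Matrix.of fun i j => ζ ^ (a i * b j).val := by
      ext i j
      simp [φ, ← pow_mul, hζ.pow_val_mul]
    have hV : ((Polynomial.aeval ζ).comp φ).mapMatrix (Matrix.vandermonde MvPolynomial.X) =
        Matrix.vandermonde fun i => ζ ^ (a i).val := by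
      ext i j
      simp [φ]
    have hV_ne : (Matrix.vandermonde fun i => ζ ^ (a i).val).det ≠ 0 :=
      Matrix.det_vandermonde_ne_zero_iff.2 fun i j hij =>
        ha (ZMod.val_injective p (hζ.pow_inj (ZMod.val_lt _) (ZMod.val_lt _) hij))
    have h := congrArg ((Polynomial.aeval ζ).comp φ) hQ
    rw [map_mul, AlgHom.map_det, AlgHom.map_det, hD, hV, hdet] at h
    exact (mul_eq_zero.1 h.symm).resolve_left hV_ne
  have hp : (p : ℤ) ∣ MvPolynomial.eval 1 Q := by
    simpa [φ, MvPolynomial.eval_one_aeval_X_pow] using hζ.prime_dvd_eval_one hroot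
  have hprod := (hp.mul_right _).trans (MvPolynomial.eval_one_mul_prod_eq_prod _ hQ).dvd
  rw [← ZMod.intCast_zmod_eq_zero_iff_dvd] at hprod
  simp only [ZMod.natCast_val, Int.cast_prod, Int.cast_sub, ZMod.intCast_cast, ZMod.cast_id',
    id_eq, prod_eq_zero_iff, mem_univ, mem_Ioi, sub_eq_zero, true_and] at hprod
  obtain ⟨i, j, hij, hbij⟩ := hprod
  exact hij.ne' (hb hbij)

end IsPrimitiveRoot

lemma isPrimitiveRoot_exp_neg_two_pi_I_div (d : ℕ) [NeZero d] :
    IsPrimitiveRoot (exp (-(2 * Real.pi * I) / d)) d := by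
  rw [neg_div, exp_neg]
  exact (isPrimitiveRoot_exp d (NeZero.ne d)).inv

lemma chi_eq_pow (d : ℕ) (a : ZMod d) : chi d a = exp (-(2 * Real.pi * I) / d) ^ a.val := by
  rw [chi, ← exp_nat_mul]
  ring_nf

lemma det_chi_mul_ne_zero {d : ℕ} [NeZero d] (hd : d.Prime) {n : ℕ} {a b : Fin n → ZMod d}
    (ha : Function.Injective a) (hb : Function.Injective b) :
    (Matrix.of fun i j => chi d (a i * b j)).det ≠ 0 := by
  have : Fact d.Prime := ⟨hd⟩
  simpa only [chi_eq_pow] using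
    (isPrimitiveRoot_exp_neg_two_pi_I_div d).det_pow_val_mul_ne_zero ha hb

lemma eq_zero_of_dft_eq_zero_on {d : ℕ} [NeZero d] (hd : d.Prime) {f : ZMod d → ℂ}
    {S Z : Finset (ZMod d)} (hS : ∀ j ∉ S, f j = 0) (hZ : ∀ l ∈ Z, dft d f l = 0)
    (hcard : #S ≤ #Z) : f = 0 := by
  obtain ⟨B, hBZ, hB⟩ := exists_subset_card_eq hcard
  set x : Fin #S → ZMod d := fun i => S.equivFin.symm i
  set y : Fin #S → ZMod d := fun k => (B.equivFinOfCardEq hB).symm k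
  have hx : Function.Injective x := Subtype.val_injective.comp S.equivFin.symm.injective
  have hy : Function.Injective y :=
    Subtype.val_injective.comp (B.equivFinOfCardEq hB).symm.injective
  have hdft : ∀ l, dft d f l = ∑ i, chi d (l * x i) * f (x i) := by
    intro l
    rw [dft, ← sum_subset (subset_univ S) fun j _ hj => by simp [hS j hj], ← sum_coe_sort S,
      ← S.equivFin.symm.sum_comp]
    simp [x, mul_comm]
  have hv : (fun i => f (x i)) = 0 := by
    refine Matrix.eq_zero_of_mulVec_eq_zero (det_chi_mul_ne_zero hd hy hx) ?_
    ext k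
    simpa [Matrix.mulVec, dotProduct, hdft] using hZ (y k) (hBZ (by simp [y]))
  ext j
  by_cases hj : j ∈ S
  · simpa [x] using congrFun hv (S.equivFin ⟨j, hj⟩)
  · exact hS j hj

theorem stmt6 (d : ℕ) [NeZero d] (hd : d.Prime) (f : ZMod d → ℂ) (hf : f ≠ 0) :
    d + 1 ≤ {j : ZMod d | f j ≠ 0}.ncard + {l : ZMod d | dft d f l ≠ 0}.ncard := by
  classical
  by_contra! hlt
  have hsplit := card_filter_add_card_filter_not (s := univ) fun l => dft d f l ≠ 0
  simp only [Set.ncard_eq_toFinset_card', Set.toFinset_ofPred] at hlt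
  simp only [card_univ, ZMod.card, not_not] at hsplit
  exact hf (eq_zero_of_dft_eq_zero_on hd (S := univ.filter fun j => f j ≠ 0)
    (Z := univ.filter fun l => dft d f l = 0) (by simp) (fun l hl => (mem_filter.1 hl).2)
    (by omega))
end

section
/- Let V ⊆ {0,...,m} ⊆ Z be a finite set of nonnegative integers with max(V) ≤ m < d/2, and define g in C^d by g_j = 2^j for j in V (as integers in {0,...,d-1}) and g_j = 0 otherwise. Then for every k in {0,...,m} such that there exists j with j, j-k both in V, and every l in Z_d, V_g g(k,l) ≠ 0. -/
open Complex Finset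

/-! Since `2m < d`, no index wraps around modulo `d`, so only the `j` with `j, j - k ∈ V`
contribute to `V_g g (k, l)`, each with modulus `2^j 2^(j-k) = 4^j / 2^k`. The term with the
largest such `j = J` then outweighs all the others together, because `∑_{j<J} 4^j < 4^J`. -/

lemma norm_chi (d : ℕ) (a : ZMod d) : ‖chi d a‖ = 1 := by
  rw [chi, show -(2 * (Real.pi : ℂ) * I * (a.val : ℂ)) / (d : ℂ)
      = ((-(2 * Real.pi * (a.val : ℝ)) / (d : ℝ) : ℝ) : ℂ) * I by push_cast; ring]
  exact norm_exp_ofReal_mul_I _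

lemma ZMod.sum_univ_eq_sum_range {d : ℕ} [NeZero d] {M : Type*} [AddCommMonoid M]
    (F : ZMod d → M) : ∑ j, F j = ∑ n ∈ range d, F n :=
  sum_nbij' ZMod.val Nat.cast (by simp [ZMod.val_lt]) (by simp) (by simp)
    (fun _ hn ↦ ZMod.val_natCast_of_lt (mem_range.mp hn)) (by simp)

lemma ZMod.val_natCast_sub_natCast_of_lt {d a b : ℕ} (hab : a < b) (hbd : b ≤ d) :
    ((a : ZMod d) - b).val = a + d - b := by
  rw [← ZMod.val_natCast_of_lt (n := d) (a := a + d - b) (by omega)]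
  congr 1
  rw [Nat.cast_sub (by omega), Nat.cast_add, ZMod.natCast_self, add_zero]

lemma sum_ne_zero_of_sum_erase_norm_lt {ι E : Type*} [DecidableEq ι] [NormedAddCommGroup E]
    {s : Finset ι} {f : ι → E} {a : ι} (ha : a ∈ s)
    (h : ∑ i ∈ s.erase a, ‖f i‖ < ‖f a‖) : ∑ i ∈ s, f i ≠ 0 := by
  intro hsum
  rw [← add_sum_erase s f ha, add_eq_zero_iff_eq_neg] at hsum
  have := norm_sum_le (s.erase a) f
  rw [hsum, norm_neg] at h
  linarith

/-- The indices of the nonzero terms of `V_g g (k, ·)`. -/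
def lagSupport (V : Finset ℕ) (k : ℕ) : Finset ℕ := V.filter fun n ↦ k ≤ n ∧ n - k ∈ V

section PowersOfTwo

variable {d m : ℕ} {V : Finset ℕ} {g : ZMod d → ℂ}

lemma apply_natCast_of_lt
    (hg : ∀ j : ZMod d, g j = if j.val ∈ V then (2 : ℂ) ^ j.val else 0) {n : ℕ} (hn : n < d) :
    g n = if n ∈ V then 2 ^ n else 0 := by
  rw [hg, ZMod.val_natCast_of_lt hn]

lemma apply_natCast_sub_natCast (hm : 2 * m < d) (hV : V ⊆ range (m + 1))
    (hg : ∀ j : ZMod d, g j = if j.val ∈ V then (2 : ℂ) ^ j.val else 0) {n k : ℕ}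
    (hn : n < d) (hk : k ≤ m) :
    g (n - k) = if k ≤ n ∧ n - k ∈ V then 2 ^ (n - k) else 0 := by
  by_cases hkn : k ≤ n
  · rw [← Nat.cast_sub hkn, apply_natCast_of_lt hg (by omega)]
    simp [hkn]
  · have hout : n + d - k ∉ V := fun h ↦ by have := mem_range.mp (hV h); omega
    rw [hg, ZMod.val_natCast_sub_natCast_of_lt (by omega) (by omega)]
    simp [hkn, hout]

lemma stft_eq_sum_lagSupport [NeZero d] (hm : 2 * m < d) (hV : V ⊆ range (m + 1))
    (hg : ∀ j : ZMod d, g j = if j.val ∈ V then (2 : ℂ) ^ j.val else 0) {k : ℕ} (hk : k ≤ m)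
    (l : ZMod d) :
    stft d g g k l = ∑ n ∈ lagSupport V k, (2 : ℂ) ^ n * 2 ^ (n - k) * chi d (n * l) := by
  have hsub : lagSupport V k ⊆ range d := fun n hn ↦
    mem_range.mpr (by have := mem_range.mp (hV (mem_filter.mp hn).1); omega)
  rw [stft, ZMod.sum_univ_eq_sum_range, ← inter_eq_right.mpr hsub, ← sum_ite_mem]
  refine sum_congr rfl fun n hn ↦ ?_
  have hn := mem_range.mp hn
  rw [apply_natCast_of_lt hg hn, apply_natCast_sub_natCast hm hV hg hn hk]
  simp only [lagSupport, mem_filter]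
  by_cases hnV : n ∈ V <;> by_cases hkn : k ≤ n ∧ n - k ∈ V <;>
    simp [hnV, hkn, Complex.conj_ofNat]

end PowersOfTwo

lemma norm_two_pow_mul_two_pow_sub_mul_chi {d n k : ℕ} (hkn : k ≤ n) (a : ZMod d) :
    ‖(2 : ℂ) ^ n * 2 ^ (n - k) * chi d a‖ = 4 ^ n / 2 ^ k := by
  rw [norm_mul, norm_chi, mul_one, norm_mul, norm_pow, norm_pow, Complex.norm_two,
    pow_sub₀ _ two_ne_zero hkn, show (4 : ℝ) = 2 * 2 by norm_num, mul_pow, mul_div_assoc,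
    div_eq_mul_inv]

theorem stmt9_general (d m : ℕ) [NeZero d] (hm : 2 * m < d)
    (V : Finset ℕ) (hV : V ⊆ Finset.range (m + 1))
    (g : ZMod d → ℂ) (hg : ∀ j : ZMod d, g j = if j.val ∈ V then (2 : ℂ) ^ j.val else 0)
    (k : ℕ) (hk : k ≤ m) (hkV : ∃ j ∈ V, k ≤ j ∧ j - k ∈ V) :
    ∀ l : ZMod d, stft d g g (k : ZMod d) l ≠ 0 := by
  intro l
  have hne : (lagSupport V k).Nonempty := by
    obtain ⟨j, hj⟩ := hkV
    exact ⟨j, mem_filter.mpr hj⟩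
  obtain ⟨J, hJ, hJmax⟩ := (lagSupport V k).exists_max_image id hne
  have hkle : ∀ n ∈ lagSupport V k, k ≤ n := fun n hn ↦ (mem_filter.mp hn).2.1
  rw [stft_eq_sum_lagSupport hm hV hg hk l]
  refine sum_ne_zero_of_sum_erase_norm_lt hJ ?_
  calc ∑ n ∈ (lagSupport V k).erase J, ‖(2 : ℂ) ^ n * 2 ^ (n - k) * chi d (n * l)‖
      = (∑ n ∈ (lagSupport V k).erase J, (4 : ℝ) ^ n) / 2 ^ k := by
        rw [sum_div]
        exact sum_congr rfl fun n hn ↦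
          norm_two_pow_mul_two_pow_sub_mul_chi (hkle n (mem_of_mem_erase hn)) _
    _ < 4 ^ J / 2 ^ k := by
        gcongr
        exact_mod_cast Nat.geomSum_lt (by norm_num) fun n hn ↦
          lt_of_le_of_ne (hJmax n (mem_of_mem_erase hn)) (ne_of_mem_erase hn)
    _ = _ := (norm_two_pow_mul_two_pow_sub_mul_chi (hkle J hJ) _).symm

theorem stmt9 (d m : ℕ) [NeZero d] (hd : 2 ≤ d) (hm : 2 * m < d)
    (V : Finset ℕ) (hV : V ⊆ Finset.range (m + 1))
    (g : ZMod d → ℂ) (hg : ∀ j : ZMod d, g j = if j.val ∈ V then (2 : ℂ) ^ j.val else 0)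
    (k : ℕ) (hk : k ≤ m) (hkV : ∃ j ∈ V, k ≤ j ∧ j - k ∈ V) :
    ∀ l : ZMod d, stft d g g (k : ZMod d) l ≠ 0 :=
  stmt9_general d m hm V hV g hg k hk hkV
end

section
/- Let p ≥ 3, d = 2p+1, and define g in C^d (real-valued) by: g_1 = -1/(2cos(2p²π/d)), g_{p+1} = -2cos(2p²π/d), g_j = 0 for p+2 ≤ j ≤ d-1, g_{p-1} = c for a parameter c in R, and g_j = 1 for all other j in {0,...,p}. Then for every l in Z_d, V_g g(p,l) = 2cos(2lpπ/d) - 2cos(2p²π/d), and V_g g(p,l) = 0 if and only if l ∈ {p, p+1}. -/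
open Complex Finset

/-!
Only `j ∈ {0, p, p + 1}` contribute to `V_g g(p, l)`: for `p + 2 ≤ j` the factor `g_j` vanishes,
and for `1 ≤ j ≤ p - 1` the shifted index `j - p ≡ j + p + 1` lies in the zero block. Since
`-p ≡ p + 1 (mod d)`, the three terms are `-2 cos θ` (with `θ = 2πp²/d`), `e^{-2πipl/d}` and
`g_{p+1} g_1 e^{2πipl/d} = e^{2πipl/d}`, which sum to `2 cos(2πpl/d) - 2 cos θ`. That vanishes iff
`pl ≡ ±p² (mod d)`, i.e. `l ≡ ±p` because `p` is a unit modulo `2p + 1`.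
-/

lemma chi_intCast (d : ℕ) [NeZero d] (n : ℤ) :
    chi d n = Complex.exp (-(2 * Real.pi * Complex.I * n) / d) := by
  have hd : (d : ℂ) ≠ 0 := Nat.cast_ne_zero.mpr (NeZero.ne d)
  have hval : (((n : ZMod d).val : ℤ) : ℂ) = n - d * (n / d : ℤ) := by
    rw [ZMod.val_intCast, Int.emod_def]; push_cast; ring
  rw [chi, Complex.exp_eq_exp_iff_exists_int]
  refine ⟨n / d, ?_⟩
  rw [← Int.cast_natCast (R := ℂ) (ZMod.val _), hval]
  field_simp
  ring

lemma chi_add_chi_neg (d : ℕ) [NeZero d] (n : ℤ) :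
    chi d n + chi d (-n : ℤ) = ((2 * Real.cos (2 * Real.pi * n / d) : ℝ) : ℂ) := by
  rw [chi_intCast, chi_intCast]
  push_cast
  rw [Complex.two_cos, add_comm]
  congr 2 <;> ring

lemma cos_two_pi_mul_div_eq_cos_iff (d : ℕ) [NeZero d] (m n : ℤ) :
    Real.cos (2 * Real.pi * m / d) = Real.cos (2 * Real.pi * n / d) ↔
      (m : ZMod d) = n ∨ (m : ZMod d) = -n := by
  have hd : (d : ℝ) ≠ 0 := Nat.cast_ne_zero.mpr (NeZero.ne d)
  have key : ∀ a b k : ℤ, 2 * Real.pi * a / d = 2 * k * Real.pi + 2 * Real.pi * b / d ↔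
      a - b = d * k := by
    intro a b k
    rw [div_eq_iff hd, add_mul, div_mul_cancel₀ _ hd, ← sub_eq_iff_eq_add, ← mul_sub,
      show 2 * k * Real.pi * d = 2 * Real.pi * (d * k) by ring,
      mul_right_inj' (by positivity)]
    exact_mod_cast Iff.rfl
  rw [Real.cos_eq_cos_iff, ← Int.cast_neg, ZMod.intCast_eq_intCast_iff_dvd_sub,
    ZMod.intCast_eq_intCast_iff_dvd_sub]
  have key' : ∀ k : ℤ, 2 * Real.pi * n / d = 2 * k * Real.pi - 2 * Real.pi * m / d ↔
      -n - m = d * -k := by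
    intro k
    rw [← key (-n) m (-k)]
    push_cast
    constructor <;> intro h <;> linear_combination -h
  simp only [key, key', exists_or]
  exact or_congr Iff.rfl ⟨fun ⟨k, hk⟩ ↦ ⟨-k, hk⟩, fun ⟨k, hk⟩ ↦ ⟨-k, by rwa [neg_neg]⟩⟩

lemma cos_two_pi_mul_div_ne_zero {d : ℕ} (hd : Odd d) (m : ℤ) :
    Real.cos (2 * Real.pi * m / d) ≠ 0 := by
  intro h
  obtain ⟨k, hk⟩ := Real.cos_eq_zero_iff.mp h
  have hd0 : (d : ℝ) ≠ 0 := by exact_mod_cast hd.pos.ne'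
  have hR : (4 * m : ℝ) = (2 * k + 1) * d := by
    field_simp at hk
    nlinarith [Real.pi_pos]
  have hZ : 4 * m = (2 * k + 1) * (d : ℤ) := by exact_mod_cast hR
  have hodd : Odd ((2 * k + 1) * (d : ℤ)) := (odd_two_mul_add_one k).mul (by exact_mod_cast hd)
  rw [← hZ] at hodd
  exact Int.not_odd_iff_even.mpr ⟨2 * m, by ring⟩ hodd

section Window

variable {p : ℕ}

lemma natCast_add_one_eq_neg_mod_two_mul_add_one : ((p + 1 : ℕ) : ZMod (2 * p + 1)) = -p := by
  have h : ((2 * p + 1 : ℕ) : ZMod (2 * p + 1)) = 0 := ZMod.natCast_self _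
  push_cast at h ⊢
  linear_combination h

lemma isUnit_natCast_mod_two_mul_add_one : IsUnit (p : ZMod (2 * p + 1)) := by
  rw [ZMod.isUnit_iff_coprime, Nat.coprime_mul_right_add_right]
  exact Nat.coprime_one_right p

noncomputable def windowCos (p : ℕ) : ℝ :=
  Real.cos (2 * (p : ℝ) ^ 2 * Real.pi / ((2 * p + 1 : ℕ) : ℝ))

lemma windowCos_ne_zero : windowCos p ≠ 0 := by
  have h := cos_two_pi_mul_div_ne_zero (odd_two_mul_add_one p) (p ^ 2)
  rw [windowCos]
  convert h using 2
  push_cast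
  ring

lemma cos_eq_windowCos_iff (l : ZMod (2 * p + 1)) :
    Real.cos (2 * (l.val : ℝ) * p * Real.pi / ((2 * p + 1 : ℕ) : ℝ)) = windowCos p ↔
      l = p ∨ l = ((p + 1 : ℕ) : ZMod (2 * p + 1)) := by
  have h := cos_two_pi_mul_div_eq_cos_iff (2 * p + 1) (p * l.val) (p ^ 2)
  push_cast at h
  simp only [ZMod.natCast_zmod_val, sq, ← mul_neg,
    isUnit_natCast_mod_two_mul_add_one.mul_right_inj] at h
  rw [windowCos, natCast_add_one_eq_neg_mod_two_mul_add_one]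
  convert h using 3 <;> push_cast <;> ring

noncomputable def window (p : ℕ) (c : ℝ) (j : ZMod (2 * p + 1)) : ℂ :=
  if j.val = 1 then ((-(1 / (2 * windowCos p)) : ℝ) : ℂ)
  else if j.val = p + 1 then ((-(2 * windowCos p) : ℝ) : ℂ)
  else if p + 2 ≤ j.val then 0
  else if j.val = p - 1 then ((c : ℝ) : ℂ)
  else 1

variable {c : ℝ}

lemma window_zero (hp : 2 ≤ p) : window p c 0 = 1 := by
  simp only [window, ZMod.val_zero]
  grind

lemma window_one (hp : 0 < p) : window p c 1 = ((-(1 / (2 * windowCos p)) : ℝ) : ℂ) := by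
  rw [window, ZMod.val_one'' (by omega), if_pos rfl]

lemma window_natCast_self (hp : 2 ≤ p) : window p c p = 1 := by
  simp only [window, ZMod.val_natCast_of_lt (by omega : p < 2 * p + 1)]
  grind

lemma window_natCast_add_one (hp : 0 < p) :
    window p c ((p + 1 : ℕ)) = ((-(2 * windowCos p) : ℝ) : ℂ) := by
  simp only [window, ZMod.val_natCast_of_lt (by omega : p + 1 < 2 * p + 1)]
  grind

lemma window_eq_zero_of_le {j : ZMod (2 * p + 1)} (hj : p + 2 ≤ j.val) : window p c j = 0 := by
  simp only [window]
  grind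

lemma window_mul_conj_window_sub_eq_zero {j : ZMod (2 * p + 1)} (h0 : j ≠ 0) (hjp : j ≠ p)
    (hjp1 : j ≠ ((p + 1 : ℕ) : ZMod (2 * p + 1))) :
    window p c j * (starRingEnd ℂ) (window p c (j - p)) = 0 := by
  by_cases hj : p + 2 ≤ j.val
  · rw [window_eq_zero_of_le hj, zero_mul]
  have hj0 : j.val ≠ 0 := by rwa [Ne, ZMod.val_eq_zero]
  have hj_lt : j.val < p := by
    have hval := ZMod.natCast_zmod_val j
    have : j.val ≠ p := fun h ↦ hjp (by rw [← hval, h])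
    have : j.val ≠ p + 1 := fun h ↦ hjp1 (by rw [← hval, h])
    omega
  have hsub : j - p = ((j.val + (p + 1) : ℕ) : ZMod (2 * p + 1)) := by
    rw [Nat.cast_add, natCast_add_one_eq_neg_mod_two_mul_add_one, ZMod.natCast_zmod_val,
      sub_eq_add_neg]
  have hval_sub : p + 2 ≤ (j - p).val := by
    rw [hsub, ZMod.val_natCast_of_lt (by omega)]
    omega
  rw [window_eq_zero_of_le hval_sub, map_zero, mul_zero]

lemma stft_window (hp : 2 ≤ p) (l : ZMod (2 * p + 1)) :
    stft (2 * p + 1) (window p c) (window p c) p l =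
      ((2 * Real.cos (2 * (l.val : ℝ) * p * Real.pi / ((2 * p + 1 : ℕ) : ℝ))
        - 2 * windowCos p : ℝ) : ℂ) := by
  have hinj : ∀ a b : ℕ, a < 2 * p + 1 → b < 2 * p + 1 →
      (a : ZMod (2 * p + 1)) = b → a = b := fun a b ha hb h ↦ by
    rw [← ZMod.val_natCast_of_lt ha, ← ZMod.val_natCast_of_lt hb, h]
  have h0p : (0 : ZMod (2 * p + 1)) ≠ p := fun h ↦ by
    have := hinj 0 p (by omega) (by omega) (by rwa [Nat.cast_zero]); omega
  have h0p1 : (0 : ZMod (2 * p + 1)) ≠ ((p + 1 : ℕ) : ZMod (2 * p + 1)) := fun h ↦ by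
    have := hinj 0 (p + 1) (by omega) (by omega) (by rwa [Nat.cast_zero]); omega
  have hpp1 : (p : ZMod (2 * p + 1)) ≠ ((p + 1 : ℕ) : ZMod (2 * p + 1)) := fun h ↦ by
    have := hinj p (p + 1) (by omega) (by omega) h; omega
  have hpl : (p : ZMod (2 * p + 1)) * l = ((p * l.val : ℤ) : ZMod (2 * p + 1)) := by
    push_cast
    rw [ZMod.natCast_zmod_val]
  rw [stft, ← Finset.sum_subset
    (subset_univ {0, (p : ZMod (2 * p + 1)), ((p + 1 : ℕ) : ZMod (2 * p + 1))})]
  · rw [sum_insert (by simp only [mem_insert, mem_singleton, not_or]; exact ⟨h0p, h0p1⟩),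
      sum_insert (by rwa [mem_singleton]), sum_singleton]
    rw [zero_sub, ← natCast_add_one_eq_neg_mod_two_mul_add_one, sub_self,
      show ((p + 1 : ℕ) : ZMod (2 * p + 1)) - p = 1 by push_cast; ring,
      window_zero hp, window_natCast_self hp, window_natCast_add_one (by omega),
      window_one (by omega), natCast_add_one_eq_neg_mod_two_mul_add_one, neg_mul, hpl,
      ← Int.cast_neg]
    have hchi_zero : chi (2 * p + 1) (0 * l) = 1 := by simp [chi]
    have hprod : ((-(2 * windowCos p) : ℝ) : ℂ) * ((-(1 / (2 * windowCos p)) : ℝ) : ℂ) = 1 := by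
      rw [← Complex.ofReal_mul, neg_mul_neg, mul_one_div_cancel (by simpa using windowCos_ne_zero),
        Complex.ofReal_one]
    have harg : 2 * (l.val : ℝ) * p * Real.pi / ((2 * p + 1 : ℕ) : ℝ) =
        2 * Real.pi * ((p * l.val : ℤ) : ℝ) / ((2 * p + 1 : ℕ) : ℝ) := by
      push_cast
      ring
    rw [hchi_zero, Complex.conj_ofReal, Complex.conj_ofReal, map_one, hprod, harg,
      Complex.ofReal_sub, ← chi_add_chi_neg]
    push_cast
    ring
  · intro j _ hj
    simp only [mem_insert, mem_singleton, not_or] at hj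
    rw [window_mul_conj_window_sub_eq_zero hj.1 hj.2.1 hj.2.2, zero_mul]

end Window

theorem stmt13 (p d : ℕ) [NeZero d] (hp : 3 ≤ p) (hd : d = 2 * p + 1)
    (c : ℝ) (g : ZMod d → ℂ)
    (hg : ∀ j : ZMod d, g j =
      if j.val = 1 then ((-(1 / (2 * Real.cos (2 * (p : ℝ)^2 * Real.pi / d))) : ℝ) : ℂ)
      else if j.val = p + 1 then ((-(2 * Real.cos (2 * (p : ℝ)^2 * Real.pi / d)) : ℝ) : ℂ)
      else if p + 2 ≤ j.val then 0
      else if j.val = p - 1 then ((c : ℝ) : ℂ)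
      else 1) :
    ∀ l : ZMod d,
      stft d g g (p : ZMod d) l =
        ((2 * Real.cos (2 * (l.val : ℝ) * p * Real.pi / d)
          - 2 * Real.cos (2 * (p : ℝ)^2 * Real.pi / d) : ℝ) : ℂ) ∧
      (stft d g g (p : ZMod d) l = 0 ↔ l = (p : ZMod d) ∨ l = ((p + 1 : ℕ) : ZMod d)) := by
  intro l
  subst hd
  obtain rfl : g = window p c := funext hg
  have hstft := stft_window (c := c) (by omega) l
  refine ⟨hstft, ?_⟩
  rw [hstft, Complex.ofReal_eq_zero, sub_eq_zero, mul_right_inj' two_ne_zero]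
  exact cos_eq_windowCos_iff l
end

section
/- Let m > m*, where m* = (d-1)/4 if d is prime and m* = (d-1)/3 otherwise, and let Ω = ({-m,...,m} × Z_d) ∪ (Z_d × {-m,...,m}). If f, f̃ in C^d satisfy V_{f̃} f̃ = V_f f on Ω, then there exists γ with |γ| = 1 and f̃ = γf. -/
open Complex Finset

/-!
The samples with `|k| ≤ m` determine, by Fourier inversion in `l`, the lag products
`f p * conj (f (p - c))` for `0 ≤ c ≤ m`. Since the Fourier transform in `k` of `V_f f (k, l)`
is `a ↦ f̂ (l + a) * conj (f̂ a)`, the samples with `|l| ≤ m` determine the same products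
for `f̂`. Lag products of width `m` determine a function up to a unimodular constant as soon as
at most one point of its support is preceded by `m` zeros: the phase then propagates from one
support point to the next. Otherwise `f` and `f̂` each vanish on at least `2m` points, and `f`
vanishes on `m` consecutive points, which forces `|supp f̂| > m` (a Vandermonde system). For
composite `d` this contradicts `3m ≥ d`; for prime `d`, Tao's uncertainty principle
`|supp f| + |supp f̂| > d` contradicts `4m ≥ d`.
-/

open scoped ZMod
open ZMod (stdAddChar dft_apply)
open ComplexConjugate

section Fourier

variable {d : ℕ} [NeZero d]

lemma chi_eq_stdAddChar_neg (a : ZMod d) : chi d a = stdAddChar (-a) := by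
  rw [AddChar.map_neg_eq_inv, ZMod.stdAddChar_apply, ZMod.toCircle_apply, chi, neg_div,
    Complex.exp_neg]

lemma stft_eq_dft (g f : ZMod d → ℂ) (k : ZMod d) :
    (fun l => stft d g f k l) = 𝓕 fun j => f j * conj (g (j - k)) := by
  ext l
  simp only [stft, dft_apply, chi_eq_stdAddChar_neg, smul_eq_mul, mul_comm]

lemma dft_stft_self (f : ZMod d → ℂ) (l a : ZMod d) :
    𝓕 (fun k => stft d f f k l) a = 𝓕 f (l + a) * conj (𝓕 f a) := by
  have hψ (j k : ZMod d) : stdAddChar (-(k * a)) * stdAddChar (-(j * l)) =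
      stdAddChar (-(j * (l + a))) * conj (stdAddChar (-((j - k) * a))) := by
    rw [← AddChar.map_neg_eq_conj, ← AddChar.map_add_eq_mul, ← AddChar.map_add_eq_mul]
    ring_nf
  rw [dft_apply, dft_apply, dft_apply, map_sum, Finset.sum_mul_sum]
  simp only [stft, chi_eq_stdAddChar_neg, smul_eq_mul, map_mul, Finset.mul_sum]
  rw [Finset.sum_comm]
  refine Finset.sum_congr rfl fun j _ => Fintype.sum_equiv (Equiv.subLeft j) _ _ fun k => ?_
  rw [Equiv.subLeft_apply]
  linear_combination f j * conj (f (j - k)) * hψ j k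

end Fourier

def LagProductsEq {d : ℕ} (m : ℕ) (g g' : ZMod d → ℂ) : Prop :=
  ∀ c ≤ m, ∀ p : ZMod d, g' p * conj (g' (p - c)) = g p * conj (g (p - c))

section Sampling

variable {d : ℕ} [NeZero d]

lemma lagProductsEq_of_stft_eq {m : ℕ} {f f' : ZMod d → ℂ}
    (h : ∀ c ≤ m, ∀ l, stft d f' f' c l = stft d f f c l) : LagProductsEq m f f' := by
  intro c hc p
  have h𝓕 : 𝓕 (fun j => f' j * conj (f' (j - c))) = 𝓕 fun j => f j * conj (f (j - c)) := by
    rw [← stft_eq_dft, ← stft_eq_dft]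
    exact funext (h c hc)
  exact congrFun (ZMod.dft.injective h𝓕) p

lemma lagProductsEq_dft_of_stft_eq {m : ℕ} {f f' : ZMod d → ℂ}
    (h : ∀ c ≤ m, ∀ k, stft d f' f' k c = stft d f f k c) :
    LagProductsEq m (𝓕 f) (𝓕 f') := by
  intro c hc p
  have key := dft_stft_self f' c (p - c)
  rw [show (fun k => stft d f' f' k c) = fun k => stft d f f k c from funext (h c hc),
    dft_stft_self, add_sub_cancel] at key
  exact key.symm

end Sampling

section Gaps

variable {d : ℕ} [NeZero d] {M : Type*} [Zero M] [DecidableEq M]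

def gapEnds (m : ℕ) (g : ZMod d → M) : Finset (ZMod d) :=
  {t | g t ≠ 0 ∧ ∀ i ∈ Icc (1 : ℕ) m, g (t - i) = 0}

variable {m : ℕ} {g : ZMod d → M}

lemma mem_gapEnds {t : ZMod d} :
    t ∈ gapEnds m g ↔ g t ≠ 0 ∧ ∀ i ∈ Icc 1 m, g (t - i) = 0 := by
  simp [gapEnds]

lemma eq_of_mem_gapEnds_of_sub_eq_sub {t t' : ZMod d} (ht : t ∈ gapEnds m g)
    (ht' : t' ∈ gapEnds m g) {i i' : ℕ} (hi' : i' ≤ m) (hii' : i ≤ i')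
    (h : t - i = t' - i') : t = t' ∧ i = i' := by
  obtain rfl | hlt := hii'.eq_or_lt
  · exact ⟨sub_left_injective h, rfl⟩
  · refine absurd ((mem_gapEnds.1 ht').2 (i' - i) (mem_Icc.2 ⟨by omega, by omega⟩)) ?_
    rw [Nat.cast_sub hlt.le, sub_sub_eq_add_sub, add_comm, add_sub_assoc, ← h, add_sub_cancel]
    exact (mem_gapEnds.1 ht).1

lemma card_gapEnds_mul_le (m : ℕ) (g : ZMod d → M) :
    #(gapEnds m g) * m ≤ #{x | g x = 0} := by
  have hmaps :
      ∀ q ∈ gapEnds m g ×ˢ Icc 1 m, q.1 - q.2 ∈ ({x | g x = 0} : Finset (ZMod d)) := by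
    intro q hq
    rw [mem_product] at hq
    simpa using (mem_gapEnds.1 hq.1).2 q.2 hq.2
  have hinj : Set.InjOn (fun q : ZMod d × ℕ => q.1 - q.2) ↑(gapEnds m g ×ˢ Icc 1 m) := by
    rintro ⟨t, i⟩ hq ⟨t', i'⟩ hq' h
    simp only [coe_product, Set.mem_prod, mem_coe, mem_Icc] at hq hq' h
    rcases le_total i i' with hii' | hii'
    · obtain ⟨rfl, rfl⟩ := eq_of_mem_gapEnds_of_sub_eq_sub hq.1 hq'.1 hq'.2.2 hii' h
      rfl
    · obtain ⟨rfl, rfl⟩ := eq_of_mem_gapEnds_of_sub_eq_sub hq'.1 hq.1 hq.2.2 hii' h.symm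
      rfl
  simpa using card_le_card_of_injOn _ hmaps hinj

lemma exists_ne_zero_forall_mem_gapEnds_eq (hg : g ≠ 0) (hE : #(gapEnds m g) ≤ 1) :
    ∃ t₀, g t₀ ≠ 0 ∧ ∀ t ∈ gapEnds m g, t = t₀ := by
  obtain ⟨t₀, ht₀⟩ | hempty := (gapEnds m g).eq_empty_or_nonempty.symm
  · exact ⟨t₀, (mem_gapEnds.1 ht₀).1, fun t ht => card_le_one.1 hE t ht t₀ ht₀⟩
  · obtain ⟨t₀, ht₀⟩ := Function.ne_iff.1 hg
    exact ⟨t₀, ht₀, by simp [hempty]⟩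

end Gaps

namespace LagProductsEq

variable {d m : ℕ} {g g' : ZMod d → ℂ}

lemma norm_eq (h : LagProductsEq m g g') (p : ZMod d) : ‖g' p‖ = ‖g p‖ := by
  have h0 := h 0 m.zero_le p
  simp only [Nat.cast_zero, sub_zero, Complex.mul_conj'] at h0
  exact (sq_eq_sq₀ (norm_nonneg _) (norm_nonneg _)).1 (by exact_mod_cast h0)

lemma eq_zero_iff (h : LagProductsEq m g g') (p : ZMod d) : g' p = 0 ↔ g p = 0 := by
  rw [← norm_eq_zero, h.norm_eq, norm_eq_zero]

lemma apply_add_eq_mul (h : LagProductsEq m g g') {γ : ℂ} (hγ : ‖γ‖ = 1) {q : ZMod d}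
    (hq : g q ≠ 0) (hq' : g' q = γ * g q) {c : ℕ} (hc : c ≤ m) :
    g' (q + c) = γ * g (q + c) := by
  have hqc := h c hc (q + c)
  rw [add_sub_cancel_right, hq', map_mul] at hqc
  have hγγ : γ * conj γ = 1 := by
    rw [Complex.mul_conj', hγ]; norm_num
  have hcq : conj (g q) ≠ 0 := (map_ne_zero _).2 hq
  have h1 : g' (q + c) * conj γ = g (q + c) := mul_right_cancel₀ hcq (by rw [← hqc]; ring)
  linear_combination γ * h1 - g' (q + c) * hγγ

lemma exists_eq_const_mul [NeZero d] (h : LagProductsEq m g g') (hE : #(gapEnds m g) ≤ 1) :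
    ∃ γ : ℂ, ‖γ‖ = 1 ∧ g' = fun p => γ * g p := by
  by_cases hg : g = 0
  · refine ⟨1, norm_one, funext fun p => ?_⟩
    simp [(h.eq_zero_iff p).2 (congrFun hg p), hg]
  obtain ⟨t₀, ht₀, hanchor⟩ := exists_ne_zero_forall_mem_gapEnds_eq hg hE
  set γ := g' t₀ / g t₀
  have hγ : ‖γ‖ = 1 := by rw [norm_div, h.norm_eq, div_self (norm_ne_zero_iff.2 ht₀)]
  have hbase : g' t₀ = γ * g t₀ := (div_mul_cancel₀ _ ht₀).symm
  have key : ∀ n : ℕ, g' (t₀ + n) = γ * g (t₀ + n) := by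
    intro n
    induction n using Nat.strong_induction_on with
    | _ n ih =>
      by_cases hz : g (t₀ + n) = 0
      · rw [(h.eq_zero_iff _).2 hz, hz, mul_zero]
      by_cases hnm : n ≤ m
      · exact h.apply_add_eq_mul hγ ht₀ hbase hnm
      by_cases hwrap : t₀ + n = t₀
      · rwa [hwrap]
      -- `t₀ + n` is not a gap end, so a nonzero value lies at most `m` steps before it
      have hnot : t₀ + n ∉ gapEnds m g := fun hmem => hwrap (hanchor _ hmem)
      obtain ⟨i, hi1, him, hgi⟩ : ∃ i, 1 ≤ i ∧ i ≤ m ∧ g (t₀ + n - i) ≠ 0 := by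
        simpa [mem_gapEnds, hz] using hnot
      have hcast : t₀ + n - i = t₀ + (n - i : ℕ) := by
        rw [Nat.cast_sub (by omega), add_sub_assoc]
      rw [hcast] at hgi
      have := h.apply_add_eq_mul hγ hgi (ih (n - i) (by omega)) him
      rwa [add_assoc, ← Nat.cast_add, Nat.sub_add_cancel (by omega)] at this
  refine ⟨γ, hγ, funext fun p => ?_⟩
  simpa using key (p - t₀).val

end LagProductsEq

section Uncertainty

variable {d : ℕ} [NeZero d]

lemma stdAddChar_ne_zero (x : ZMod d) : stdAddChar x ≠ 0 := by
  simp [ZMod.stdAddChar_apply]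

lemma isPrimitiveRoot_stdAddChar_neg_one : IsPrimitiveRoot (stdAddChar (-1 : ZMod d)) d := by
  have h := ZMod.stdAddChar_coe (N := d) 1
  rw [Int.cast_one, Int.cast_one, mul_one] at h
  rw [AddChar.map_neg_eq_inv, h]
  exact (Complex.isPrimitiveRoot_exp d (NeZero.ne d)).inv

lemma stdAddChar_neg_mul_eq_pow (x y : ZMod d) :
    stdAddChar (-(x * y)) = stdAddChar (-1 : ZMod d) ^ (y.val * x.val) := by
  rw [← AddChar.map_nsmul_eq_pow, nsmul_eq_mul]
  push_cast [ZMod.natCast_val, ZMod.cast_id]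
  ring_nf

lemma sum_mul_eq_sum_equivFin {ι R : Type*} [Fintype ι] [NonUnitalNonAssocSemiring R]
    (S : Finset ι) {F : ι → R} (hF : ∀ x ∉ S, F x = 0) (w : ι → R) :
    ∑ x, w x * F x = ∑ k, w (S.equivFin.symm k) * F (S.equivFin.symm k) := by
  rw [← sum_subset (subset_univ S) fun x _ hx => by rw [hF x hx, mul_zero], ← sum_coe_sort,
    ← S.equivFin.symm.sum_comp]

lemma lt_card_support_dft_of_eq_zero_on_run {g : ZMod d → ℂ} (hg : g ≠ 0) {m : ℕ}
    {s : ZMod d} (hrun : ∀ j < m, g (s + j) = 0) : m < #{l | 𝓕 g l ≠ 0} := by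
  set T : Finset (ZMod d) := {l | 𝓕 g l ≠ 0}
  have hT : ∀ l ∉ T, 𝓕 g l = 0 := by simp [T]
  by_contra! hTm
  set e := T.equivFin.symm
  -- Fourier inversion on the first `#T` points of the run is a square Vandermonde system
  -- in the nodes `stdAddChar l`, `l ∈ T`
  have hv : (fun k => 𝓕 g (e k) * stdAddChar ((e k : ZMod d) * s)) = 0 := by
    refine Matrix.eq_zero_of_forall_pow_sum_mul_pow_eq_zero
      (f := fun k => stdAddChar (e k : ZMod d))
      (ZMod.injective_stdAddChar.comp (Subtype.val_injective.comp e.injective)) fun i => ?_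
    have hinv := congrFun (ZMod.dft.symm_apply_apply g) (s + i)
    rw [hrun i (i.2.trans_le hTm), ZMod.invDFT_apply, smul_eq_zero] at hinv
    have hsum := hinv.resolve_left (inv_ne_zero (Nat.cast_ne_zero.2 (NeZero.ne d)))
    simp only [smul_eq_mul] at hsum
    rw [sum_mul_eq_sum_equivFin T hT] at hsum
    rw [← hsum]
    refine sum_congr rfl fun k _ => ?_
    rw [mul_add, AddChar.map_add_eq_mul, mul_comm _ (i : ZMod d), ← nsmul_eq_mul,
      AddChar.map_nsmul_eq_pow]
    ring
  have h𝓕 : 𝓕 g = 0 := by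
    ext l
    by_contra hl
    have := congrFun hv (e.symm ⟨l, by simpa [T] using hl⟩)
    simp only [Equiv.apply_symm_apply, Pi.zero_apply, mul_eq_zero, stdAddChar_ne_zero,
      or_false] at this
    exact hl this
  exact hg (ZMod.dft.map_eq_zero_iff.1 h𝓕)

lemma lt_card_support_dft_of_mem_gapEnds {m : ℕ} {g : ZMod d → ℂ} {t : ZMod d}
    (ht : t ∈ gapEnds m g) : m < #{l | 𝓕 g l ≠ 0} := by
  rw [mem_gapEnds] at ht
  refine lt_card_support_dft_of_eq_zero_on_run (s := t - m) (fun hg => ht.1 (by simp [hg]))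
    fun j hj => ?_
  rw [show t - m + j = t - (m - j : ℕ) by rw [Nat.cast_sub hj.le]; ring]
  exact ht.2 _ (mem_Icc.2 ⟨by omega, by omega⟩)

end Uncertainty

section VandermondeDvd

open MvPolynomial

lemma X_sub_X_dvd_sub_rename_update {σ R : Type*} [CommRing R] [DecidableEq σ] (i j : σ)
    (P : MvPolynomial σ R) : X i - X j ∣ P - rename (Function.update id i j) P := by
  induction P using MvPolynomial.induction_on with
  | C a => simp
  | add P Q hP hQ =>
    rw [map_add, add_sub_add_comm]
    exact dvd_add hP hQ
  | mul_X P k hP =>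
    rw [map_mul, rename_X]
    by_cases hk : k = i
    · subst hk
      rw [Function.update_self, show P * X k - rename (Function.update id k j) P * X j =
        (P - rename (Function.update id k j) P) * X k +
          rename (Function.update id k j) P * (X k - X j) by ring]
      exact dvd_add (hP.mul_right _) (dvd_mul_left _ _)
    · rw [Function.update_of_ne hk, id, ← sub_mul]
      exact hP.mul_right _

lemma update_id_apply_ne {σ : Type*} [LinearOrder σ] {q q' : σ × σ}
    (hq : q.1 < q.2) (hq' : q'.1 < q'.2) (hne : q ≠ q') :
    Function.update id q'.2 q'.1 q.2 ≠ Function.update id q'.2 q'.1 q.1 := by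
  simp only [Function.update_apply, id]
  split_ifs with h2 h1 h1
  · exact absurd (h2.trans h1.symm) hq.ne'
  · exact fun h => hne (Prod.ext h.symm h2)
  · exact fun h => (hq'.trans (h1 ▸ hq)).ne' h
  · exact hq.ne'

lemma prod_X_sub_X_dvd {σ R : Type*} [CommRing R] [IsDomain R] [LinearOrder σ]
    (T : Finset (σ × σ)) (hT : ∀ q ∈ T, q.1 < q.2) (P : MvPolynomial σ R)
    (hP : ∀ q ∈ T, rename (Function.update id q.2 q.1) P = 0) :
    ∏ q ∈ T, (X q.2 - X q.1) ∣ P := by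
  classical
  induction T using Finset.induction_on generalizing P with
  | empty => simp
  | insert q T hqT ih =>
    have hq := hT q (mem_insert_self q T)
    obtain ⟨G, rfl⟩ : X q.2 - X q.1 ∣ P := by
      simpa [hP q (mem_insert_self q T)] using X_sub_X_dvd_sub_rename_update q.2 q.1 P
    rw [prod_insert hqT]
    refine mul_dvd_mul_left _ (ih (fun q' hq' => hT q' (mem_insert_of_mem hq')) G
      fun q' hq' => ?_)
    have hfactor :
        rename (Function.update id q'.2 q'.1) (X q.2 - X q.1 : MvPolynomial σ R) ≠ 0 := by
      rw [map_sub, rename_X, rename_X, sub_ne_zero, Ne, X_inj]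
      exact update_id_apply_ne hq (hT q' (mem_insert_of_mem hq')) (by rintro rfl; exact hqT hq')
    have h := hP q' (mem_insert_of_mem hq')
    rw [map_mul] at h
    exact (mul_eq_zero.1 h).resolve_left hfactor

lemma prod_Ioi_eq_prod_filter_lt {ι M : Type*} [Fintype ι] [LinearOrder ι]
    [LocallyFiniteOrderTop ι] [CommMonoid M] (F : ι → ι → M) :
    ∏ i, ∏ j ∈ Ioi i, F i j = ∏ q : ι × ι with q.1 < q.2, F q.1 q.2 := by
  rw [prod_filter, ← univ_product_univ, prod_product]
  simp_rw [← filter_lt_eq_Ioi, prod_filter]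

lemma det_vandermonde_X_dvd {R : Type*} [CommRing R] [IsDomain R] {s : ℕ} (n : Fin s → ℕ) :
    (Matrix.vandermonde (X : Fin s → MvPolynomial (Fin s) R)).det ∣
      (Matrix.of fun i j => (X i : MvPolynomial (Fin s) R) ^ n j).det := by
  rw [Matrix.det_vandermonde,
    prod_Ioi_eq_prod_filter_lt fun i j => (X j - X i : MvPolynomial (Fin s) R)]
  refine prod_X_sub_X_dvd _ (fun q hq => (mem_filter.1 hq).2) _ fun q hq => ?_
  rw [AlgHom.map_det]
  refine Matrix.det_zero_of_row_eq (mem_filter.1 hq).2.ne' (funext fun j => ?_)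
  simp [Function.update_of_ne (mem_filter.1 hq).2.ne]

lemma aeval_det_X_pow {R S : Type*} [CommRing R] [CommRing S] [Algebra R S] {s : ℕ}
    (x : Fin s → S) (n : Fin s → ℕ) :
    aeval x (Matrix.of fun i j => (X i : MvPolynomial (Fin s) R) ^ n j).det =
      (Matrix.of fun i j => x i ^ n j).det := by
  rw [AlgHom.map_det]
  congr 1
  ext i j
  simp

lemma aeval_det_vandermonde_X {R S : Type*} [CommRing R] [CommRing S] [Algebra R S] {s : ℕ}
    (x : Fin s → S) :
    aeval x (Matrix.vandermonde (X : Fin s → MvPolynomial (Fin s) R)).det =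
      (Matrix.vandermonde x).det :=
  aeval_det_X_pow x Fin.val

end VandermondeDvd

section Chebotarev

open Polynomial

lemma eval_one_aeval_X_pow {R σ : Type*} [CommRing R] (a : σ → ℕ) (Q : MvPolynomial σ R) :
    (MvPolynomial.aeval (fun i => (X : R[X]) ^ a i) Q).eval 1 =
      MvPolynomial.eval (fun _ => 1) Q := by
  rw [← coe_aeval_eq_eval, ← AlgHom.comp_apply, MvPolynomial.comp_aeval,
    ← MvPolynomial.coe_aeval_eq_eval]
  simp

lemma prime_dvd_eval_one_of_aeval_eq_zero {p : ℕ} (hp : p.Prime) {ω : ℂ}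
    (hω : IsPrimitiveRoot ω p) {σ : Type*} (a : σ → ℕ) {Q : MvPolynomial σ ℤ}
    (hQ : MvPolynomial.aeval (fun i => ω ^ a i) Q = 0) :
    (p : ℤ) ∣ MvPolynomial.eval (fun _ => 1) Q := by
  have := Fact.mk hp
  set U := MvPolynomial.aeval (fun i => (X : ℤ[X]) ^ a i) Q
  have hU : aeval ω U = 0 := by
    rw [← hQ, ← AlgHom.comp_apply, MvPolynomial.comp_aeval]
    simp
  have hdvd : cyclotomic p ℤ ∣ U := by
    rw [cyclotomic_eq_minpoly hω hp.pos]
    exact minpoly.isIntegrallyClosed_dvd (hω.isIntegral hp.pos) hU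
  rw [← eval_one_aeval_X_pow, ← eval_one_cyclotomic_prime (R := ℤ) (p := p)]
  exact eval_dvd hdvd

lemma X_pow_sub_X_pow_eq_mul {R : Type*} [CommRing R] (a b : ℕ) :
    (X ^ b - X ^ a : R[X]) = (X - C 1) * ((X ^ b - X ^ a) /ₘ (X - C 1)) :=
  (mul_divByMonic_eq_iff_isRoot.2 (by simp)).symm

lemma eval_one_X_pow_sub_X_pow_divByMonic {R : Type*} [CommRing R] (a b : ℕ) :
    ((X ^ b - X ^ a : R[X]) /ₘ (X - C 1)).eval 1 = b - a := by
  have h := congrArg (eval 1) (divByMonic_add_X_sub_C_mul_derivative_divByMonic_eq_derivative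
    (X ^ b - X ^ a : R[X]) 1)
  rw [map_sub, derivative_X_pow, derivative_X_pow] at h
  simpa using h

lemma prod_X_pow_sub_X_pow_eq {R : Type*} [CommRing R] {s : ℕ} (v : Fin s → ℕ) :
    ∏ i, ∏ j ∈ Ioi i, (X ^ v j - X ^ v i : R[X]) =
      (∏ i : Fin s, ∏ _j ∈ Ioi i, (X - C 1 : R[X])) *
        ∏ i, ∏ j ∈ Ioi i, ((X ^ v j - X ^ v i) /ₘ (X - C 1)) := by
  simp only [← prod_mul_distrib]
  exact prod_congr rfl fun i _ => prod_congr rfl fun j _ => X_pow_sub_X_pow_eq_mul _ _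

lemma prod_sub_eq_mul_eval_one {R : Type*} [CommRing R] [IsDomain R] {s : ℕ} {v w : Fin s → ℕ}
    {U : R[X]} (h : ∏ i, ∏ j ∈ Ioi i, (X ^ v j - X ^ v i : R[X]) =
      (∏ i, ∏ j ∈ Ioi i, (X ^ w j - X ^ w i)) * U) :
    ∏ i, ∏ j ∈ Ioi i, ((v j : R) - v i) =
      (∏ i, ∏ j ∈ Ioi i, ((w j : R) - w i)) * U.eval 1 := by
  rw [prod_X_pow_sub_X_pow_eq, prod_X_pow_sub_X_pow_eq, mul_assoc] at h
  have hne : ∏ i : Fin s, ∏ _j ∈ Ioi i, (X - C 1 : R[X]) ≠ 0 :=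
    prod_ne_zero_iff.2 fun _ _ => prod_ne_zero_iff.2 fun _ _ => X_sub_C_ne_zero 1
  simpa only [eval_mul, eval_prod, eval_one_X_pow_sub_X_pow_divByMonic] using
    congrArg (eval 1) (mul_left_cancel₀ hne h)

lemma not_dvd_prod_sub {p s : ℕ} (hp : p.Prime) {n : Fin s → ℕ} (hn : n.Injective)
    (hnp : ∀ j, n j < p) : ¬ (p : ℤ) ∣ ∏ i, ∏ j ∈ Ioi i, ((n j : ℤ) - n i) := by
  simp only [(Nat.prime_iff_prime_int.1 hp).dvd_finsetProd_iff, mem_univ, true_and, mem_Ioi,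
    not_exists, not_and]
  intro i j hij hdvd
  have hi := hnp i
  have hj := hnp j
  have h0 := Int.eq_zero_of_abs_lt_dvd hdvd (by rw [abs_lt]; omega)
  exact hij.ne (hn (by omega))

lemma det_of_X_pow_pow {R : Type*} [CommRing R] {s : ℕ} (n : Fin s → ℕ) :
    (Matrix.of fun i j : Fin s => ((X : R[X]) ^ (i : ℕ)) ^ n j).det =
      ∏ i, ∏ j ∈ Ioi i, (X ^ n j - X ^ n i : R[X]) := by
  rw [← Matrix.det_vandermonde, ← Matrix.det_transpose]
  congr 1
  ext i j
  simp [Matrix.vandermonde_apply, ← pow_mul, mul_comm]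

/- Chebotarev's theorem on roots of unity. The generic determinant `det (X i ^ n j)` is the
Vandermonde determinant times some `Q` with integer coefficients. Its vanishing at `X i = ω ^ a i`
makes `p` divide `Q (1, …, 1)`, whereas specializing `X i = z ^ i` and cancelling the factors
`z - 1` gives `∏ (n j - n i) = ∏ (j - i) * Q (1, …, 1)`. -/
theorem det_pow_mul_ne_zero_of_isPrimitiveRoot {p : ℕ} (hp : p.Prime) {ω : ℂ}
    (hω : IsPrimitiveRoot ω p) {s : ℕ} {a n : Fin s → ℕ} (ha : a.Injective)
    (hn : n.Injective) (hap : ∀ i, a i < p) (hnp : ∀ j, n j < p) :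
    (Matrix.of fun i j => ω ^ (a i * n j)).det ≠ 0 := by
  intro hdet
  obtain ⟨Q, hQ⟩ := det_vandermonde_X_dvd (R := ℤ) n
  have hQω : MvPolynomial.aeval (fun i => ω ^ a i) Q = 0 := by
    have hV : (Matrix.vandermonde fun i => ω ^ a i).det ≠ 0 :=
      Matrix.det_vandermonde_ne_zero_iff.2 fun i j h => ha (hω.pow_inj (hap i) (hap j) h)
    have h := congrArg (MvPolynomial.aeval fun i => ω ^ a i) hQ
    rw [map_mul, aeval_det_X_pow, aeval_det_vandermonde_X] at h
    simp only [← pow_mul, hdet] at h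
    exact (mul_eq_zero.1 h.symm).resolve_left hV
  have hz := congrArg (MvPolynomial.aeval fun i : Fin s => (X : ℤ[X]) ^ (i : ℕ)) hQ
  rw [map_mul, aeval_det_X_pow, aeval_det_vandermonde_X, det_of_X_pow_pow,
    Matrix.det_vandermonde] at hz
  have key := prod_sub_eq_mul_eval_one (w := Fin.val) hz
  rw [eval_one_aeval_X_pow] at key
  exact not_dvd_prod_sub hp hn hnp
    (key ▸ dvd_mul_of_dvd_right (prime_dvd_eval_one_of_aeval_eq_zero hp hω a hQω) _)

end Chebotarev

/- Tao's uncertainty principle for cyclic groups of prime order. -/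
theorem lt_card_support_add_card_support_dft {p : ℕ} [NeZero p] (hp : p.Prime)
    {g : ZMod p → ℂ} (hg : g ≠ 0) : p < #{x | g x ≠ 0} + #{l | 𝓕 g l ≠ 0} := by
  set S : Finset (ZMod p) := {x | g x ≠ 0}
  have hS : ∀ x ∉ S, g x = 0 := by simp [S]
  by_contra! hle
  obtain ⟨A, hAZ, hAcard⟩ : ∃ A ⊆ ({l | 𝓕 g l = 0} : Finset (ZMod p)), #A = #S := by
    refine exists_subset_card_eq ?_
    have := card_filter_add_card_filter_not (s := univ) (fun l => 𝓕 g l = 0)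
    simp only [card_univ, ZMod.card, ne_eq] at this hle
    omega
  set eS := S.equivFin.symm
  set eA := (A.equivFinOfCardEq hAcard).symm
  -- the minor of the Fourier matrix with rows `A` and columns `S` is invertible
  have hdet := det_pow_mul_ne_zero_of_isPrimitiveRoot hp isPrimitiveRoot_stdAddChar_neg_one
    (a := fun i => (eA i : ZMod p).val) (n := fun j => (eS j : ZMod p).val)
    ((ZMod.val_injective p).comp (Subtype.val_injective.comp eA.injective))
    ((ZMod.val_injective p).comp (Subtype.val_injective.comp eS.injective))
    (fun _ => ZMod.val_lt _) (fun _ => ZMod.val_lt _)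
  have hv : (fun j => g (eS j)) = 0 := by
    refine Matrix.eq_zero_of_mulVec_eq_zero hdet (funext fun i => ?_)
    have hzero : 𝓕 g (eA i) = 0 := by simpa using hAZ (eA i).2
    rw [ZMod.dft_apply] at hzero
    simp only [smul_eq_mul] at hzero
    rw [sum_mul_eq_sum_equivFin S hS] at hzero
    simp only [Matrix.mulVec, dotProduct, Matrix.of_apply, Pi.zero_apply, ← hzero,
      stdAddChar_neg_mul_eq_pow]
    rfl
  refine hg (funext fun x => by_contra fun hx => ?_)
  have := congrFun hv (S.equivFin ⟨x, by simpa [S] using hx⟩)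
  simp only [eS, Equiv.symm_apply_apply, Pi.zero_apply] at this
  exact hx this

theorem stmt16_general (d m : ℕ) [NeZero d]
    (hm : if d.Prime then d - 1 < 4 * m else d - 1 < 3 * m)
    (f f' : ZMod d → ℂ)
    (hsamp : ∀ k l : ZMod d,
      ((∃ a : ℤ, |a| ≤ (m : ℤ) ∧ k = (a : ZMod d)) ∨
       (∃ a : ℤ, |a| ≤ (m : ℤ) ∧ l = (a : ZMod d))) →
      stft d f' f' k l = stft d f f k l) :
    ∃ γ : ℂ, ‖γ‖ = 1 ∧ f' = fun j => γ * f j := by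
  have hP : LagProductsEq m f f' := lagProductsEq_of_stft_eq fun c hc l =>
    hsamp _ _ (Or.inl ⟨c, by simpa using hc, by simp⟩)
  have hP𝓕 : LagProductsEq m (𝓕 f) (𝓕 f') := lagProductsEq_dft_of_stft_eq fun c hc k =>
    hsamp _ _ (Or.inr ⟨c, by simpa using hc, by simp⟩)
  by_cases hE : #(gapEnds m f) ≤ 1
  · exact hP.exists_eq_const_mul hE
  by_cases hE𝓕 : #(gapEnds m (𝓕 f)) ≤ 1
  · obtain ⟨γ, hγ, h⟩ := hP𝓕.exists_eq_const_mul hE𝓕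
    exact ⟨γ, hγ, ZMod.dft.injective (by rw [h, ZMod.dft_const_mul])⟩
  obtain ⟨t, ht⟩ : (gapEnds m f).Nonempty := card_pos.1 (by omega)
  have hf : f ≠ 0 := fun h => (mem_gapEnds.1 ht).1 (by simp [h])
  have hzeros := (Nat.mul_le_mul_right m (not_le.1 hE)).trans (card_gapEnds_mul_le m f)
  have hzeros𝓕 :=
    (Nat.mul_le_mul_right m (not_le.1 hE𝓕)).trans (card_gapEnds_mul_le m (𝓕 f))
  have hcard (g : ZMod d → ℂ) : #{x | g x = 0} + #{x | g x ≠ 0} = d := by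
    simpa using card_filter_add_card_filter_not (s := univ) fun x => g x = 0
  have hcard_f := hcard f
  have hcard_𝓕f := hcard (𝓕 f)
  split_ifs at hm with hp
  · have huncertainty := lt_card_support_add_card_support_dft hp hf
    omega
  · have hspectrum := lt_card_support_dft_of_mem_gapEnds ht
    omega

theorem stmt16 (d m : ℕ) [NeZero d] (hd : 2 ≤ d)
    (hm : if d.Prime then d - 1 < 4 * m else d - 1 < 3 * m)
    (f f' : ZMod d → ℂ)
    (hsamp : ∀ k l : ZMod d,
      ((∃ a : ℤ, |a| ≤ (m : ℤ) ∧ k = (a : ZMod d)) ∨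
       (∃ a : ℤ, |a| ≤ (m : ℤ) ∧ l = (a : ZMod d))) →
      stft d f' f' k l = stft d f f k l) :
    ∃ γ : ℂ, ‖γ‖ = 1 ∧ f' = fun j => γ * f j :=
  stmt16_general d m hm f f' hsamp
end
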